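/- arXiv:1901.02592 — 6 statements merged into one kernel-verified Lean document; each statement's English description precedes it below -/
import Mathlib

section
/- Let f(r) = -k r²/l² + b - 2m/r + q²/r² and suppose r₀ > 0 satisfies b r₀² - 3 m r₀ + 2 q² = 0. Then (f(r)/r²)''|_{r=r₀} has the opposite sign of 2 b r₀ - 3 m; in particular, the photon surface is stable iff 2 b r₀ - 3 m < 0 and unstable iff 2 b r₀ - 3 m > 0. -/
/-!
Away from `r = 0` the potential `f r / r²` equals `-c + b r⁻² - 2 m r⁻³ + q² r⁻⁴`, whose second
derivative is `(6 b r² - 24 m r + 20 q²) / r⁶`. On the photon surface `2 q² = 3 m r₀ - b r₀²`,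
which turns this into `2 (3 m - 2 b r₀) / r₀⁵`; its sign is that of `3 m - 2 b r₀` since `r₀ > 0`.
-/

open Filter Topology

theorem hasDerivAt_const_div_pow (a : ℝ) (n : ℕ) {x : ℝ} (hx : x ≠ 0) :
    HasDerivAt (fun r : ℝ => a / r ^ n) (-(n * a) / x ^ (n + 1)) x := by
  refine ((hasDerivAt_const x a).div (hasDerivAt_pow n x) (pow_ne_zero n hx)).congr_deriv ?_
  rcases n with _ | n
  · simp
  · rw [Nat.add_sub_cancel]
    field_simp
    ring

noncomputable def photonPotential (c b m q r : ℝ) : ℝ :=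
  (-c * r ^ 2 + b - 2 * m / r + q ^ 2 / r ^ 2) / r ^ 2

theorem photonPotential_eventuallyEq (c b m q : ℝ) {x : ℝ} (hx : x ≠ 0) :
    photonPotential c b m q =ᶠ[𝓝 x] fun r => -c + b / r ^ 2 - 2 * m / r ^ 3 + q ^ 2 / r ^ 4 := by
  filter_upwards [eventually_ne_nhds hx] with r hr
  unfold photonPotential
  field_simp

theorem hasDerivAt_photonPotential (c b m q : ℝ) {x : ℝ} (hx : x ≠ 0) :
    HasDerivAt (photonPotential c b m q)
      (-2 * b / x ^ 3 + 6 * m / x ^ 4 - 4 * q ^ 2 / x ^ 5) x := by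
  have h := (((hasDerivAt_const x (-c)).add (hasDerivAt_const_div_pow b 2 hx)).sub
    (hasDerivAt_const_div_pow (2 * m) 3 hx)).add (hasDerivAt_const_div_pow (q ^ 2) 4 hx)
  refine (h.congr_of_eventuallyEq (photonPotential_eventuallyEq c b m q hx)).congr_deriv ?_
  push_cast
  ring

theorem deriv_deriv_photonPotential (c b m q : ℝ) {x : ℝ} (hx : x ≠ 0) :
    deriv (deriv (photonPotential c b m q)) x =
      6 * b / x ^ 4 - 24 * m / x ^ 5 + 20 * q ^ 2 / x ^ 6 := by
  have hderiv : deriv (photonPotential c b m q) =ᶠ[𝓝 x]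
      fun r => -2 * b / r ^ 3 + 6 * m / r ^ 4 - 4 * q ^ 2 / r ^ 5 := by
    filter_upwards [eventually_ne_nhds hx] with r hr
    exact (hasDerivAt_photonPotential c b m q hr).deriv
  have h := ((hasDerivAt_const_div_pow (-2 * b) 3 hx).add
    (hasDerivAt_const_div_pow (6 * m) 4 hx)).sub (hasDerivAt_const_div_pow (4 * q ^ 2) 5 hx)
  rw [hderiv.deriv_eq]
  refine h.deriv.trans ?_
  push_cast
  ring

theorem deriv_deriv_photonPotential_of_photonSurface (c b m q : ℝ) {r₀ : ℝ} (hr₀ : r₀ ≠ 0)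
    (hps : b * r₀ ^ 2 - 3 * m * r₀ + 2 * q ^ 2 = 0) :
    deriv (deriv (photonPotential c b m q)) r₀ = 2 * (3 * m - 2 * b * r₀) / r₀ ^ 5 := by
  rw [deriv_deriv_photonPotential c b m q hr₀]
  field_simp
  linear_combination 10 * hps

theorem cmetric_photon_surface_stability_general (k l b m q : ℝ)
    (r₀ : ℝ) (hr₀ : 0 < r₀) (hps : b * r₀ ^ 2 - 3 * m * r₀ + 2 * q ^ 2 = 0) :
    (0 < deriv (deriv (fun r : ℝ =>
        (-(k / l ^ 2) * r ^ 2 + b - 2 * m / r + q ^ 2 / r ^ 2) / r ^ 2)) r₀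
      ↔ 2 * b * r₀ - 3 * m < 0) ∧
    (deriv (deriv (fun r : ℝ =>
        (-(k / l ^ 2) * r ^ 2 + b - 2 * m / r + q ^ 2 / r ^ 2) / r ^ 2)) r₀ < 0
      ↔ 0 < 2 * b * r₀ - 3 * m) := by
  change (0 < deriv (deriv (photonPotential (k / l ^ 2) b m q)) r₀ ↔ _) ∧
    (deriv (deriv (photonPotential (k / l ^ 2) b m q)) r₀ < 0 ↔ _)
  have hr₀5 : 0 < r₀ ^ 5 := by positivity
  rw [deriv_deriv_photonPotential_of_photonSurface _ b m q hr₀.ne' hps,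
    div_pos_iff_of_pos_right hr₀5, div_lt_iff₀ hr₀5, zero_mul]
  constructor <;> constructor <;> intro h <;> linarith

/-- C-metric photon surface stability: at a radius `r₀ > 0` with
`b r₀² - 3 m r₀ + 2 q² = 0`, the second derivative of `r ↦ f r / r²` has the
opposite sign of `2 b r₀ - 3 m`. -/
theorem cmetric_photon_surface_stability (k l b m q : ℝ) (hl : l ≠ 0)
    (r₀ : ℝ) (hr₀ : 0 < r₀) (hps : b * r₀ ^ 2 - 3 * m * r₀ + 2 * q ^ 2 = 0) :
    (0 < deriv (deriv (fun r : ℝ =>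
        (-(k / l ^ 2) * r ^ 2 + b - 2 * m / r + q ^ 2 / r ^ 2) / r ^ 2)) r₀
      ↔ 2 * b * r₀ - 3 * m < 0) ∧
    (deriv (deriv (fun r : ℝ =>
        (-(k / l ^ 2) * r ^ 2 + b - 2 * m / r + q ^ 2 / r ^ 2) / r ^ 2)) r₀ < 0
      ↔ 0 < 2 * b * r₀ - 3 * m) :=
  cmetric_photon_surface_stability_general k l b m q r₀ hr₀ hps
end

section
/- For f(r) = 1 - 2m/r + q²/r² (Reissner–Nordström, k = 0) with 0 < q² < m² and 9m² - 8q² ≥ 0, the outer photon-surface radius r₊ = (3m + √(9m²-8q²))/2 satisfies f(r₊) > 0, while the inner radius r₋ = (3m - √(9m²-8q²))/2 satisfies f(r₋) < 0. -/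
/-!
Writing `f r = (r² - 2mr + q²) / r²` and using the photon-surface equation `r² = 3mr - 2q²`,
the numerator becomes `m r - q²`, so at a photon radius `f` has the sign of `m r - q²`.
For `r₊` this is positive because `3m² > 2q²`; for `r₋` it is negative because
`(3m² - 2q²)² = m²(9m² - 8q²) + 4q²(q² - m²) < (m √(9m² - 8q²))²`.
-/

noncomputable def rnLapse (m q r : ℝ) : ℝ := 1 - 2 * m / r + q ^ 2 / r ^ 2

theorem sq_sub_three_mul_add_eq_zero_of_sq_eq {m q r : ℝ}
    (h : (2 * r - 3 * m) ^ 2 = 9 * m ^ 2 - 8 * q ^ 2) : r ^ 2 - 3 * m * r + 2 * q ^ 2 = 0 := by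
  linear_combination h / 4

theorem rnLapse_eq_of_photon {m q r : ℝ} (hr : r ≠ 0)
    (hph : r ^ 2 - 3 * m * r + 2 * q ^ 2 = 0) :
    rnLapse m q r = (m * r - q ^ 2) / r ^ 2 := by
  unfold rnLapse
  field_simp
  linear_combination hph

theorem sq_lt_mul_outer_photon_radius {m q s : ℝ} (hm : 0 < m) (hsub : q ^ 2 < m ^ 2)
    (hs : 0 ≤ s) : q ^ 2 < m * ((3 * m + s) / 2) := by
  nlinarith [mul_nonneg hm.le hs]

theorem mul_inner_photon_radius_lt_sq {m q s : ℝ} (hm : 0 < m) (hq : 0 < q ^ 2)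
    (hsub : q ^ 2 < m ^ 2) (hs : s ^ 2 = 9 * m ^ 2 - 8 * q ^ 2) (hs0 : 0 ≤ s) :
    m * ((3 * m - s) / 2) < q ^ 2 := by
  have hsq : (3 * m ^ 2 - 2 * q ^ 2) ^ 2 < (m * s) ^ 2 := by
    rw [mul_pow, hs]
    nlinarith [mul_pos hq (sub_pos.mpr hsub)]
  have := lt_of_pow_lt_pow_left₀ 2 (mul_nonneg hm.le hs0) hsq
  linarith

theorem subextremal_RN_photon_surfaces_general (m q : ℝ) (hm : 0 < m)
    (hq : 0 < q ^ 2) (hsub : q ^ 2 < m ^ 2) :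
    (1 - 2 * m / ((3 * m + Real.sqrt (9 * m ^ 2 - 8 * q ^ 2)) / 2)
        + q ^ 2 / ((3 * m + Real.sqrt (9 * m ^ 2 - 8 * q ^ 2)) / 2) ^ 2 > 0) ∧
    (1 - 2 * m / ((3 * m - Real.sqrt (9 * m ^ 2 - 8 * q ^ 2)) / 2)
        + q ^ 2 / ((3 * m - Real.sqrt (9 * m ^ 2 - 8 * q ^ 2)) / 2) ^ 2 < 0) := by
  set s := Real.sqrt (9 * m ^ 2 - 8 * q ^ 2)
  have hs : s ^ 2 = 9 * m ^ 2 - 8 * q ^ 2 := Real.sq_sqrt (by nlinarith)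
  have hs0 : 0 ≤ s := Real.sqrt_nonneg _
  have hs3m : s < 3 * m := by nlinarith
  have photon_outer :=
    sq_sub_three_mul_add_eq_zero_of_sq_eq (r := (3 * m + s) / 2) (by rw [← hs]; ring)
  have photon_inner :=
    sq_sub_three_mul_add_eq_zero_of_sq_eq (r := (3 * m - s) / 2) (by rw [← hs]; ring)
  constructor
  · change 0 < rnLapse m q ((3 * m + s) / 2)
    rw [rnLapse_eq_of_photon (by positivity) photon_outer]
    exact div_pos (sub_pos.mpr (sq_lt_mul_outer_photon_radius hm hsub hs0)) (by positivity)
  · change rnLapse m q ((3 * m - s) / 2) < 0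
    rw [rnLapse_eq_of_photon (by linarith) photon_inner]
    exact div_neg_of_neg_of_pos (sub_neg.mpr (mul_inner_photon_radius_lt_sq hm hq hsub hs hs0))
      (pow_pos (by linarith) 2)

/-- Sub-extremal Reissner–Nordström: `f r₊ > 0` and `f r₋ < 0` for the photon
surface radii `r₊, r₋ = (3m ± √(9m²-8q²))/2`, where `f r = 1 - 2m/r + q²/r²`. -/
theorem subextremal_RN_photon_surfaces (m q : ℝ) (hm : 0 < m)
    (hq : 0 < q ^ 2) (hsub : q ^ 2 < m ^ 2) (hdisc : 9 * m ^ 2 - 8 * q ^ 2 ≥ 0) :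
    (1 - 2 * m / ((3 * m + Real.sqrt (9 * m ^ 2 - 8 * q ^ 2)) / 2)
        + q ^ 2 / ((3 * m + Real.sqrt (9 * m ^ 2 - 8 * q ^ 2)) / 2) ^ 2 > 0) ∧
    (1 - 2 * m / ((3 * m - Real.sqrt (9 * m ^ 2 - 8 * q ^ 2)) / 2)
        + q ^ 2 / ((3 * m - Real.sqrt (9 * m ^ 2 - 8 * q ^ 2)) / 2) ^ 2 < 0) :=
  subextremal_RN_photon_surfaces_general m q hm hq hsub
end

section
/- Let F(r,n) = h(n)²·[f(r) + μ²/(r^{2(D-2)} n²)] with h(n) = C n^{1/(D-1)}, C > 0, μ ≠ 0, D ≥ 3, f smooth and positive. Then for r, n > 0, ∂F/∂n (r,n) = 0 if and only if v_s² := 1/(D-1) equals μ²/(μ² + f(r) r^{2(D-2)} n²). -/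
/-- For radiation fluid, `∂F/∂n = 0` iff the sound speed squared `1/(D-1)`
equals the flow 3-velocity squared `μ²/(μ² + f r · r^{2(D-2)} n²)`. -/
theorem radiation_critical_n_condition (D : ℕ) (hD : 3 ≤ D) (C μ : ℝ)
    (hC : 0 < C) (hμ : μ ≠ 0) (f : ℝ → ℝ) (hf : ContDiff ℝ (⊤ : ℕ∞) f)
    (hfpos : ∀ r : ℝ, 0 < r → 0 < f r) (r n : ℝ) (hr : 0 < r) (hn : 0 < n) :
    deriv (fun n : ℝ =>
        (C * n ^ ((1 : ℝ) / ((D : ℝ) - 1))) ^ 2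
          * (f r + μ ^ 2 / (r ^ (2 * (D - 2)) * n ^ 2))) n = 0
      ↔ (1 : ℝ) / ((D : ℝ) - 1)
          = μ ^ 2 / (μ ^ 2 + f r * r ^ (2 * (D - 2)) * n ^ 2) := by
  set α : ℝ := (1 : ℝ) / ((D : ℝ) - 1) with hα
  set a : ℝ := f r with ha'
  set b : ℝ := r ^ (2 * (D - 2)) with hb'
  have ha : 0 < a := hfpos r hr
  have hb : 0 < b := pow_pos hr _
  have hP : 0 < n ^ α := Real.rpow_pos_of_pos hn α
  have hD1 : (1 : ℝ) < (D : ℝ) - 1 := by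
    have : (3 : ℝ) ≤ (D : ℝ) := by exact_mod_cast hD
    linarith
  have hαpos : 0 < α := by positivity
  -- compute the derivative
  have hpow : HasDerivAt (fun x : ℝ => x ^ α) (α * n ^ (α - 1)) n :=
    Real.hasDerivAt_rpow_const (Or.inl hn.ne')
  have hCpow : HasDerivAt (fun x : ℝ => C * x ^ α) (C * (α * n ^ (α - 1))) n :=
    hpow.const_mul C
  have hsq : HasDerivAt (fun x : ℝ => (C * x ^ α) ^ 2)
      (2 * (C * n ^ α) ^ 1 * (C * (α * n ^ (α - 1)))) n := hCpow.pow 2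
  have hden : HasDerivAt (fun x : ℝ => b * x ^ 2) (b * (2 * n ^ 1)) n :=
    (hasDerivAt_pow 2 n).const_mul b
  have hdenne : b * n ^ 2 ≠ 0 := by positivity
  have hfrac : HasDerivAt (fun x : ℝ => μ ^ 2 / (b * x ^ 2))
      ((0 * (b * n ^ 2) - μ ^ 2 * (b * (2 * n ^ 1))) / (b * n ^ 2) ^ 2) n :=
    (hasDerivAt_const n (μ ^ 2)).div hden hdenne
  have hsum : HasDerivAt (fun x : ℝ => a + μ ^ 2 / (b * x ^ 2))
      ((0 * (b * n ^ 2) - μ ^ 2 * (b * (2 * n ^ 1))) / (b * n ^ 2) ^ 2) n :=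
    hfrac.const_add a
  have htot : HasDerivAt (fun x : ℝ => (C * x ^ α) ^ 2 * (a + μ ^ 2 / (b * x ^ 2)))
      (2 * (C * n ^ α) ^ 1 * (C * (α * n ^ (α - 1))) * (a + μ ^ 2 / (b * n ^ 2))
        + (C * n ^ α) ^ 2 *
          ((0 * (b * n ^ 2) - μ ^ 2 * (b * (2 * n ^ 1))) / (b * n ^ 2) ^ 2)) n :=
    hsq.mul hsum
  rw [htot.deriv]
  -- rewrite n ^ (α - 1)
  have hsubexp : n ^ (α - 1) = n ^ α / n := by
    rw [Real.rpow_sub hn, Real.rpow_one]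
  rw [hsubexp]
  -- factor the derivative
  have hkey : 2 * (C * n ^ α) ^ 1 * (C * (α * (n ^ α / n))) * (a + μ ^ 2 / (b * n ^ 2))
        + (C * n ^ α) ^ 2 *
          ((0 * (b * n ^ 2) - μ ^ 2 * (b * (2 * n ^ 1))) / (b * n ^ 2) ^ 2)
      = (2 * C ^ 2 * (n ^ α) ^ 2 / (b * n ^ 3))
          * (α * (μ ^ 2 + a * b * n ^ 2) - μ ^ 2) := by
    field_simp
    ring
  rw [hkey]
  have hcoef : (2 * C ^ 2 * (n ^ α) ^ 2 / (b * n ^ 3)) ≠ 0 := by positivity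
  have hS : (0 : ℝ) < μ ^ 2 + a * b * n ^ 2 := by positivity
  rw [mul_eq_zero, or_iff_right hcoef, sub_eq_zero,
    eq_div_iff hS.ne', mul_comm]
end

section
/- Let f be smooth and positive on r > 0, D ≥ 3, and define F(r,n) for radiation enthalpy h(n) = C n^{1/(D-1)}. If (r_c, n_c) with r_c, n_c > 0 satisfies ∂_n F = ∂_r F = 0, then (f(r)·r^{-2})'|_{r=r_c} = 0 and n_c = |μ|·√(2(D-2)/(r_c^{2D-3} f'(r_c))). -/
/-- Critical point of radiation fluid flow: if `(r_c, n_c)` is a critical point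
of `F`, then `(f r / r²)'(r_c) = 0` and
`n_c = |μ| √(2(D-2)/(r_c^{2D-3} f'(r_c)))`. -/
theorem radiation_critical_point (D : ℕ) (hD : 3 ≤ D) (C μ : ℝ)
    (hC : 0 < C) (hμ : μ ≠ 0) (f : ℝ → ℝ) (hf : ContDiff ℝ (⊤ : ℕ∞) f)
    (hfpos : ∀ r : ℝ, 0 < r → 0 < f r)
    (rc nc : ℝ) (hrc : 0 < rc) (hnc : 0 < nc) (hf' : 0 < deriv f rc)
    (hcritn : deriv (fun n : ℝ =>
        (C * n ^ ((1 : ℝ) / ((D : ℝ) - 1))) ^ 2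
          * (f rc + μ ^ 2 / (rc ^ (2 * (D - 2)) * n ^ 2))) nc = 0)
    (hcritr : deriv (fun r : ℝ =>
        (C * nc ^ ((1 : ℝ) / ((D : ℝ) - 1))) ^ 2
          * (f r + μ ^ 2 / (r ^ (2 * (D - 2)) * nc ^ 2))) rc = 0) :
    deriv (fun r : ℝ => f r / r ^ 2) rc = 0 ∧
    nc = |μ| * Real.sqrt (2 * ((D : ℝ) - 2) / (rc ^ (2 * D - 3) * deriv f rc)) := by
  obtain ⟨d, rfl⟩ : ∃ d, D = d + 3 := ⟨D - 3, by omega⟩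
  have hk : 2 * (d + 3 - 2) = 2 * d + 2 := by omega
  have hk2 : 2 * (d + 3) - 3 = 2 * d + 3 := by omega
  have hpD : (1 : ℝ) / ((↑(d + 3) : ℝ) - 1) = 1 / ((d : ℝ) + 2) := by push_cast; ring
  rw [hk, hpD] at hcritn hcritr
  rw [hk2]
  set dr : ℝ := (d : ℝ) with hdr
  have hdr0 : (0:ℝ) ≤ dr := Nat.cast_nonneg d
  set p : ℝ := 1 / (dr + 2) with hp
  have hp0 : p ≠ 0 := by positivity
  have hrc0 : rc ≠ 0 := hrc.ne'
  have hnc0 : nc ≠ 0 := hnc.ne'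
  have hC0 : C ≠ 0 := hC.ne'
  -- r equation
  have hd1 : HasDerivAt f (deriv f rc) rc :=
    ((hf.differentiable (by simp)) rc).hasDerivAt
  have hd2 : HasDerivAt (fun r : ℝ => (r ^ (2*d+2))⁻¹)
      (-(((2*d+2:ℕ):ℝ) * rc ^ (2*d+1)) / (rc ^ (2*d+2)) ^ 2) rc := by
    have := (hasDerivAt_pow (2*d+2) rc).inv (pow_ne_zero _ hrc0)
    simpa [Pi.inv_def] using this
  set K : ℝ := (C * nc ^ p) ^ 2 with hK
  have hKpos : 0 < K := by
    have : 0 < nc ^ p := Real.rpow_pos_of_pos hnc p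
    positivity
  have hdr2 : HasDerivAt (fun r : ℝ =>
      K * f r + (K * μ ^ 2 / nc ^ 2) * (r ^ (2*d+2))⁻¹)
      (K * deriv f rc + (K * μ ^ 2 / nc ^ 2) *
        (-(((2*d+2:ℕ):ℝ) * rc ^ (2*d+1)) / (rc ^ (2*d+2)) ^ 2)) rc :=
    (hd1.const_mul K).add (hd2.const_mul _)
  have hfeq : (fun r : ℝ => (C * nc ^ p) ^ 2 * (f r + μ ^ 2 / (r ^ (2*d+2) * nc ^ 2)))
      = fun r : ℝ => K * f r + (K * μ ^ 2 / nc ^ 2) * (r ^ (2*d+2))⁻¹ := by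
    funext r
    rw [hK]
    ring
  have E2 : K * deriv f rc + (K * μ ^ 2 / nc ^ 2) *
      (-(((2*d+2:ℕ):ℝ) * rc ^ (2*d+1)) / (rc ^ (2*d+2)) ^ 2) = 0 := by
    rw [← hdr2.deriv, ← hfeq]
    exact hcritr
  have hB : deriv f rc * nc ^ 2 * rc ^ (2*d+3) = 2 * (dr + 1) * μ ^ 2 := by
    have h := E2
    field_simp at h
    push_cast at h
    have hcan : (deriv f rc * nc ^ 2 * rc ^ (2*d+3) - 2 * (dr + 1) * μ ^ 2)
        * (K * rc ^ (2*d+1)) = 0 := by linear_combination h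
    rcases mul_eq_zero.mp hcan with h' | h'
    · linarith
    · exact absurd h' (by positivity)
  -- n equation
  set A1 : ℝ := C ^ 2 * f rc with hA1
  set A2 : ℝ := C ^ 2 * μ ^ 2 / rc ^ (2*d+2) with hA2
  have hg1 : HasDerivAt (fun n : ℝ => A1 * n ^ (2*p))
      (A1 * ((2*p) * nc ^ (2*p - 1))) nc :=
    (Real.hasDerivAt_rpow_const (Or.inl hnc0)).const_mul A1
  have hg2 : HasDerivAt (fun n : ℝ => A2 * n ^ (2*p - 2))
      (A2 * ((2*p - 2) * nc ^ (2*p - 2 - 1))) nc :=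
    (Real.hasDerivAt_rpow_const (Or.inl hnc0)).const_mul A2
  have hg := hg1.add hg2
  have hev : (fun n : ℝ => (C * n ^ p) ^ 2 * (f rc + μ ^ 2 / (rc ^ (2*d+2) * n ^ 2)))
      =ᶠ[nhds nc] fun n : ℝ => A1 * n ^ (2*p) + A2 * n ^ (2*p - 2) := by
    filter_upwards [Ioi_mem_nhds hnc] with n hn
    have hn0 : (0:ℝ) < n := hn
    have e1 : (n ^ p) ^ 2 = n ^ (2*p) := by
      rw [← Real.rpow_natCast (n ^ p) 2, ← Real.rpow_mul hn0.le]
      norm_num [mul_comm]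
    have e2 : n ^ (2*p - 2) = n ^ (2*p) / n ^ 2 := by
      rw [Real.rpow_sub hn0]
      norm_num [Real.rpow_natCast]
    rw [e2, ← e1, hA1, hA2]
    have hn2 : n ^ 2 ≠ 0 := pow_ne_zero _ hn0.ne'
    field_simp
  have E1 : A1 * ((2*p) * nc ^ (2*p - 1)) + A2 * ((2*p - 2) * nc ^ (2*p - 2 - 1)) = 0 := by
    rw [← hg.deriv]
    exact hev.deriv_eq.symm.trans hcritn
  have hsplit : nc ^ (2*p - 1) = nc ^ (2*p - 2 - 1) * nc ^ 2 := by
    rw [← Real.rpow_natCast nc 2, ← Real.rpow_add hnc]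
    norm_num
    congr 1
    ring
  rw [hsplit] at E1
  set t : ℝ := nc ^ (2*p - 2 - 1) with ht
  have htpos : 0 < t := Real.rpow_pos_of_pos hnc _
  have hX : (A1 * (2*p) * nc ^ 2 + A2 * (2*p - 2)) * t = 0 := by linear_combination E1
  have hX0 : A1 * (2*p) * nc ^ 2 + A2 * (2*p - 2) = 0 := by
    rcases mul_eq_zero.mp hX with h' | h'
    · exact h'
    · exact absurd h' htpos.ne'
  have hA' : f rc * nc ^ 2 * rc ^ (2*d+2) = (dr + 1) * μ ^ 2 := by
    rw [hA1, hA2, hp] at hX0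
    have h2 : dr + 2 ≠ 0 := by positivity
    field_simp at hX0
    have hcan : (f rc * nc ^ 2 * rc ^ (2*d+2) - (dr + 1) * μ ^ 2) * (2 * C ^ 2 * (dr + 2)) = 0 := by
      linear_combination (dr + 2) * hX0
    rcases mul_eq_zero.mp hcan with h' | h'
    · linarith
    · exact absurd h' (by positivity)
  constructor
  · have hdq : HasDerivAt (fun r : ℝ => f r / r ^ 2)
        ((deriv f rc * rc ^ 2 - f rc * (↑(2:ℕ) * rc ^ 1)) / (rc ^ 2) ^ 2) rc :=
      hd1.div (hasDerivAt_pow 2 rc) (pow_ne_zero 2 hrc0)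
    rw [hdq.deriv]
    have hz : (deriv f rc * rc - 2 * f rc) * (nc ^ 2 * rc ^ (2*d+2)) = 0 := by
      linear_combination hB - 2 * hA'
    have hfac : deriv f rc * rc - 2 * f rc = 0 := by
      rcases mul_eq_zero.mp hz with h' | h'
      · exact h'
      · exact absurd h' (by positivity)
    have hnum : deriv f rc * rc ^ 2 - f rc * (↑(2:ℕ) * rc ^ 1) = 0 := by
      push_cast
      linear_combination rc * hfac
    rw [hnum, zero_div]
  · have hcast : ((↑(d+3):ℝ)) - 2 = dr + 1 := by push_cast; ring
    rw [hcast]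
    have hq : 2 * (dr + 1) / (rc ^ (2*d+3) * deriv f rc) = (nc / |μ|) ^ 2 := by
      rw [div_pow, sq_abs]
      rw [div_eq_div_iff (by positivity) (by positivity)]
      linear_combination -hB
    rw [hq, Real.sqrt_sq (by positivity)]
    have habs : |μ| ≠ 0 := abs_ne_zero.mpr hμ
    field_simp
end

section
/- Define ℱ(r) := (1/(D-1))·[1 + 2(D-2)·f(r)/(r f'(r))] - 1 for radiation fluid. If f(r) > 0 and f'(r) ≠ 0, then ℱ(r) = -((D-2)/(D-1))·(f(r) r^{-2})'/(f'(r) r^{-2}); in particular ℱ(r) = 0 iff (f(r)/r²)' = 0. -/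
/-! Both sides equal `-((D-2)/(D-1)) · (1 - 2 f/(r f'))`, because `(f/r²)' = (r f' - 2 f)/r³`. -/

theorem deriv_div_sq {f : ℝ → ℝ} {r : ℝ} (hf : DifferentiableAt ℝ f r) (hr : r ≠ 0) :
    deriv (fun s => f s / s ^ 2) r = (r * deriv f r - 2 * f r) / r ^ 3 := by
  rw [deriv_fun_div hf (differentiableAt_pow 2) (pow_ne_zero 2 hr)]
  simp only [deriv_pow_field]
  field_simp
  ring

theorem deriv_div_sq_div_deriv_div_sq {f : ℝ → ℝ} {r : ℝ} (hf' : deriv f r ≠ 0) (hr : r ≠ 0) :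
    deriv (fun s => f s / s ^ 2) r / (deriv f r / r ^ 2) = 1 - 2 * (f r / (r * deriv f r)) := by
  rw [deriv_div_sq (differentiableAt_of_deriv_ne_zero hf') hr]
  field_simp

theorem one_div_sub_one_mul_sub_one (d x : ℝ) (hd : d ≠ 1) :
    1 / (d - 1) * (1 + 2 * (d - 2) * x) - 1 = -((d - 2) / (d - 1)) * (1 - 2 * x) := by
  have : d - 1 ≠ 0 := sub_ne_zero.mpr hd
  field_simp
  ring

theorem radiation_F_photon_surface_general (D : ℕ) (hD : 3 ≤ D) (f : ℝ → ℝ) (r : ℝ)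
    (hr : 0 < r)
    (hf' : deriv f r ≠ 0) :
    ((1 : ℝ) / ((D : ℝ) - 1))
        * (1 + 2 * ((D : ℝ) - 2) * (f r / (r * deriv f r))) - 1
      = -(((D : ℝ) - 2) / ((D : ℝ) - 1))
          * (deriv (fun s : ℝ => f s / s ^ 2) r / (deriv f r / r ^ 2)) ∧
    (((1 : ℝ) / ((D : ℝ) - 1))
        * (1 + 2 * ((D : ℝ) - 2) * (f r / (r * deriv f r))) - 1 = 0
      ↔ deriv (fun s : ℝ => f s / s ^ 2) r = 0) := by
  have hD3 : (3 : ℝ) ≤ D := by exact_mod_cast hD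
  have hcoeff : ((D : ℝ) - 2) / ((D : ℝ) - 1) ≠ 0 := div_ne_zero (by linarith) (by linarith)
  have hF : ((1 : ℝ) / ((D : ℝ) - 1))
        * (1 + 2 * ((D : ℝ) - 2) * (f r / (r * deriv f r))) - 1
      = -(((D : ℝ) - 2) / ((D : ℝ) - 1))
          * (deriv (fun s : ℝ => f s / s ^ 2) r / (deriv f r / r ^ 2)) := by
    rw [one_div_sub_one_mul_sub_one _ _ (by linarith),
      deriv_div_sq_div_deriv_div_sq hf' hr.ne']
  refine ⟨hF, ?_⟩
  rw [hF, mul_eq_zero_iff_left (neg_ne_zero.mpr hcoeff), div_eq_zero_iff,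
    or_iff_left (div_ne_zero hf' (pow_ne_zero 2 hr.ne'))]

/-- The radiation critical-point function `ℱ` is proportional to the photon
surface condition: `ℱ r = -((D-2)/(D-1)) · (f/r²)'(r) / (f'(r)/r²)`, so
`ℱ r = 0` iff `(f/r²)'(r) = 0`. -/
theorem radiation_F_photon_surface (D : ℕ) (hD : 3 ≤ D) (f : ℝ → ℝ) (r : ℝ)
    (hr : 0 < r) (hf : DifferentiableAt ℝ f r) (hfr : 0 < f r)
    (hf' : deriv f r ≠ 0) :
    ((1 : ℝ) / ((D : ℝ) - 1))
        * (1 + 2 * ((D : ℝ) - 2) * (f r / (r * deriv f r))) - 1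
      = -(((D : ℝ) - 2) / ((D : ℝ) - 1))
          * (deriv (fun s : ℝ => f s / s ^ 2) r / (deriv f r / r ^ 2)) ∧
    (((1 : ℝ) / ((D : ℝ) - 1))
        * (1 + 2 * ((D : ℝ) - 2) * (f r / (r * deriv f r))) - 1 = 0
      ↔ deriv (fun s : ℝ => f s / s ^ 2) r = 0) :=
  radiation_F_photon_surface_general D hD f r hr hf'
end

section
/- Suppose f is smooth, f(r_c) > 0, f'(r_c) > 0, and (f/r²)'(r_c) = 0. Then ℱ'(r_c) = -((D-2)/(D-1))·(f r^{-2})''(r_c)/(f'(r_c) r_c^{-2}); hence ℱ'(r_c) > 0 iff (f/r²)''(r_c) < 0. Consequently the critical point of radiation flow is a saddle point iff the constant-r photon surface at r_c is unstable. -/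
/-- Saddle/extremum classification matches photon surface stability: at a
photon surface radius `r_c`,
`ℱ'(r_c) = -((D-2)/(D-1)) (f/r²)''(r_c) / (f'(r_c)/r_c²)`, hence
`ℱ'(r_c) > 0` iff `(f/r²)''(r_c) < 0`. -/
theorem radiation_saddle_iff_unstable (D : ℕ) (hD : 3 ≤ D) (f : ℝ → ℝ)
    (hf : ContDiff ℝ (⊤ : ℕ∞) f) (rc : ℝ) (hrc : 0 < rc) (hfrc : 0 < f rc)
    (hf' : 0 < deriv f rc)
    (hps : deriv (fun r : ℝ => f r / r ^ 2) rc = 0) :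
    deriv (fun r : ℝ =>
        ((1 : ℝ) / ((D : ℝ) - 1))
          * (1 + 2 * ((D : ℝ) - 2) * (f r / (r * deriv f r))) - 1) rc
      = -(((D : ℝ) - 2) / ((D : ℝ) - 1))
          * (deriv (deriv (fun s : ℝ => f s / s ^ 2)) rc / (deriv f rc / rc ^ 2)) ∧
    (0 < deriv (fun r : ℝ =>
        ((1 : ℝ) / ((D : ℝ) - 1))
          * (1 + 2 * ((D : ℝ) - 2) * (f r / (r * deriv f r))) - 1) rc
      ↔ deriv (deriv (fun s : ℝ => f s / s ^ 2)) rc < 0) := by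
  have hfd : Differentiable ℝ f := hf.differentiable (by simp)
  have hsm : ContDiff ℝ (⊤ : ℕ∞) (deriv f) :=
    (contDiff_infty_iff_deriv.mp (hf.of_le (by simp))).2
  have hfd' : Differentiable ℝ (deriv f) := hsm.differentiable (by simp)
  set f' := deriv f rc with hf'def
  set f'' := deriv (deriv f) rc with hf''def
  have hrcne : rc ≠ 0 := hrc.ne'
  have hf'ne : f' ≠ 0 := hf'.ne'
  -- explicit formula for deriv of g = f/r^2 away from 0
  have hg : ∀ x : ℝ, x ≠ 0 → HasDerivAt (fun r : ℝ => f r / r ^ 2)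
      ((deriv f x * x ^ 2 - f x * (2 * x ^ 1)) / (x ^ 2) ^ 2) x := by
    intro x hx
    exact ((hfd x).hasDerivAt).div (hasDerivAt_pow 2 x) (pow_ne_zero 2 hx)
  have hEq : deriv (fun r : ℝ => f r / r ^ 2)
      =ᶠ[nhds rc] fun x => (deriv f x * x ^ 2 - f x * (2 * x ^ 1)) / (x ^ 2) ^ 2 := by
    filter_upwards [eventually_ne_nhds hrcne] with x hx using (hg x hx).deriv
  -- from hps : numerator vanishes
  have hrel : f' * rc ^ 2 - f rc * (2 * rc ^ 1) = 0 := by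
    have h1 := (hg rc hrcne).deriv
    rw [hps] at h1
    have := (div_eq_zero_iff.mp h1.symm).resolve_right (pow_ne_zero 2 (pow_ne_zero 2 hrcne))
    exact this
  -- second derivative of g
  have hN : HasDerivAt (fun x : ℝ => deriv f x * x ^ 2 - f x * (2 * x ^ 1))
      (f'' * rc ^ 2 + f' * (2 * rc ^ 1) - (f' * (2 * rc ^ 1) + f rc * 2)) rc := by
    have h1 : HasDerivAt (fun x : ℝ => deriv f x * x ^ 2) (f'' * rc ^ 2 + f' * (2 * rc ^ 1)) rc :=
      ((hfd' rc).hasDerivAt).mul (hasDerivAt_pow 2 rc)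
    have h2 : HasDerivAt (fun x : ℝ => f x * (2 * x ^ 1)) (f' * (2 * rc ^ 1) + f rc * 2) rc := by
      have := ((hfd rc).hasDerivAt).mul (((hasDerivAt_id rc).const_mul 2))
      rw [show (fun x : ℝ => f x * (2 * x ^ 1)) = f * fun y => 2 * id y from by funext x; simp]
      exact this.congr_deriv (by simp [hf'def])
    exact h1.sub h2
  have hDen : HasDerivAt (fun x : ℝ => (x ^ 2) ^ 2) (2 * (rc ^ 2) ^ 1 * (2 * rc ^ 1)) rc :=
    (hasDerivAt_pow 2 rc).pow 2
  have hphi : HasDerivAt (fun x : ℝ => (deriv f x * x ^ 2 - f x * (2 * x ^ 1)) / (x ^ 2) ^ 2)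
      (((f'' * rc ^ 2 + f' * (2 * rc ^ 1) - (f' * (2 * rc ^ 1) + f rc * 2)) * ((rc ^ 2) ^ 2)
        - (f' * rc ^ 2 - f rc * (2 * rc ^ 1)) * (2 * (rc ^ 2) ^ 1 * (2 * rc ^ 1)))
        / ((rc ^ 2) ^ 2) ^ 2) rc :=
    hN.div hDen (pow_ne_zero 2 (pow_ne_zero 2 hrcne))
  have hg2 : deriv (deriv (fun s : ℝ => f s / s ^ 2)) rc
      = ((f'' * rc ^ 2 + f' * (2 * rc ^ 1) - (f' * (2 * rc ^ 1) + f rc * 2)) * ((rc ^ 2) ^ 2)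
        - (f' * rc ^ 2 - f rc * (2 * rc ^ 1)) * (2 * (rc ^ 2) ^ 1 * (2 * rc ^ 1)))
        / ((rc ^ 2) ^ 2) ^ 2 := by
    rw [hEq.deriv_eq]
    exact hphi.deriv
  -- derivative of F
  have hdenF : rc * f' ≠ 0 := mul_ne_zero hrcne hf'ne
  have hinner : HasDerivAt (fun r : ℝ => f r / (r * deriv f r))
      ((f' * (rc * f') - f rc * (1 * f' + rc * f'')) / (rc * f') ^ 2) rc :=
    ((hfd rc).hasDerivAt).div ((hasDerivAt_id rc).mul ((hfd' rc).hasDerivAt)) hdenF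
  have hF : deriv (fun r : ℝ =>
        ((1 : ℝ) / ((D : ℝ) - 1))
          * (1 + 2 * ((D : ℝ) - 2) * (f r / (r * deriv f r))) - 1) rc
      = ((1 : ℝ) / ((D : ℝ) - 1)) * (2 * ((D : ℝ) - 2)
          * ((f' * (rc * f') - f rc * (1 * f' + rc * f'')) / (rc * f') ^ 2)) := by
    have h := ((((hinner.const_mul (2 * ((D : ℝ) - 2))).const_add 1).const_mul
      ((1 : ℝ) / ((D : ℝ) - 1))).sub_const 1)
    simpa using h.deriv
  have hD3 : (3 : ℝ) ≤ (D : ℝ) := by exact_mod_cast hD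
  have hD1 : (D : ℝ) - 1 ≠ 0 := by linarith
  have hrel' : f' * rc = 2 * f rc := by
    have : f' * rc ^ 2 = f rc * (2 * rc) := by nlinarith [hrel]
    have h2 := mul_right_cancel₀ hrcne (by nlinarith : f' * rc * rc = 2 * f rc * rc)
    exact h2
  have hmain : deriv (fun r : ℝ =>
        ((1 : ℝ) / ((D : ℝ) - 1))
          * (1 + 2 * ((D : ℝ) - 2) * (f r / (r * deriv f r))) - 1) rc
      = -(((D : ℝ) - 2) / ((D : ℝ) - 1))
          * (deriv (deriv (fun s : ℝ => f s / s ^ 2)) rc / (f' / rc ^ 2)) := by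
    have hsub : f' = 2 * f rc / rc := by
      field_simp
      linarith [hrel']
    rw [hF, hg2, hsub]
    have hfrcne : f rc ≠ 0 := hfrc.ne'
    field_simp
    ring
  refine ⟨hmain, ?_⟩
  have hk : (0 : ℝ) < ((D : ℝ) - 2) / ((D : ℝ) - 1) := div_pos (by linarith) (by linarith)
  have hq : (0 : ℝ) < f' / rc ^ 2 := div_pos hf' (by positivity)
  set G2 := deriv (deriv (fun s : ℝ => f s / s ^ 2)) rc
  have hc : -(((D : ℝ) - 2) / ((D : ℝ) - 1)) / (f' / rc ^ 2) < 0 :=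
    div_neg_of_neg_of_pos (by linarith) hq
  rw [hmain, show -(((D : ℝ) - 2) / ((D : ℝ) - 1)) * (G2 / (f' / rc ^ 2))
      = (-(((D : ℝ) - 2) / ((D : ℝ) - 1)) / (f' / rc ^ 2)) * G2 from by ring]
  constructor
  · intro h
    rcases mul_pos_iff.mp h with ⟨h1, _⟩ | ⟨_, h2⟩
    · linarith
    · exact h2
  · intro h
    exact mul_pos_of_neg_of_neg hc h
end
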